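/- A timed language L is accepted by a one-clock integer-reset timed automaton (1-IRTA) if and only if there exists a constant K ∈ ℕ such that the equivalence ≈^{L,K} is K-monotonic and has finite index. -/

import Mathlib

open scoped NNReal Classical

namespace IRTA

/-- A timestamp is a finite sequence of non-negative reals. -/
abbrev Timestamp : Type := List ℝ≥0

/-- A timed word is a finite sequence of (delay, letter) pairs. -/
abbrev TimedWord (A : Type) : Type := List (ℝ≥0 × A)

/-- Fractional part of a non-negative real. -/
noncomputable def fracPart (x : ℝ≥0) : ℝ≥0 := x - (⌊x⌋₊ : ℝ≥0)

/-- `x` is a natural-number value. -/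
def IsNatVal (x : ℝ≥0) : Prop := ∃ m : ℕ, x = (m : ℝ≥0)

/-- Region equivalence `≡^K`. -/
def RegEq (K : ℕ) (x y : ℝ≥0) : Prop :=
  (⌊x⌋₊ = ⌊y⌋₊ ∧ (fracPart x = 0 ↔ fracPart y = 0)) ∨ ((K : ℝ≥0) < x ∧ (K : ℝ≥0) < y)

/-- One step of the (greedy) clock evolution: reset whenever the value is an
integer between `0` and `K`. -/
noncomputable def resetStep (K : ℕ) (v : ℝ≥0) : ℝ≥0 :=
  if ∃ m : ℕ, m ≤ K ∧ v = (m : ℝ≥0) then 0 else v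

/-- Auxiliary function computing `c^K` with accumulator `v`. -/
noncomputable def cKAux (K : ℕ) : ℝ≥0 → Timestamp → ℝ≥0
  | v, [] => v
  | v, t :: d => cKAux K (resetStep K (v + t)) d

/-- `c^K(d)`: the sum of the delays after the last integral position of `d`. -/
noncomputable def cK (K : ℕ) (d : Timestamp) : ℝ≥0 := cKAux K 0 d

/-- `c^K` of a timed word is `c^K` of its timestamp. -/
noncomputable def cKW {A : Type} (K : ℕ) (w : TimedWord A) : ℝ≥0 :=
  cK K (w.map Prod.fst)

/-- `c^K_⊤` : `c^K` truncated at `K`. -/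
noncomputable def cKTop {A : Type} (K : ℕ) (w : TimedWord A) : WithTop ℝ≥0 :=
  if cKW K w ≤ (K : ℝ≥0) then ((cKW K w : ℝ≥0) : WithTop ℝ≥0) else ⊤

/-! ### Clock constraints and one-clock timed automata -/

/-- Clock constraints `φ ::= x < m | m < x | x = m | φ ∧ φ`. -/
inductive CC : Type where
  | lt : ℕ → CC
  | gt : ℕ → CC
  | eq : ℕ → CC
  | and : CC → CC → CC

/-- Satisfaction of a clock constraint by a clock value. -/
def CC.sat : CC → ℝ≥0 → Prop
  | .lt m, x => x < (m : ℝ≥0)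
  | .gt m, x => (m : ℝ≥0) < x
  | .eq m, x => x = (m : ℝ≥0)
  | .and φ ψ, x => φ.sat x ∧ ψ.sat x

/-- The largest constant appearing in a clock constraint. -/
def CC.maxConst : CC → ℕ
  | .lt m => m
  | .gt m => m
  | .eq m => m
  | .and φ ψ => max φ.maxConst ψ.maxConst

/-- A transition of a one-clock timed automaton; `reset = true` means the
clock is reset (the `r = 0` case). -/
structure TTrans (Q A : Type) where
  src : Q
  dst : Q
  lab : A
  guard : CC
  reset : Bool

/-- A one-clock timed automaton. -/
structure TA (A : Type) where
  Q : Type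
  init : Q
  final : Set Q
  trans : Set (TTrans Q A)

/-- The automaton has finitely many states and transitions. -/
def TA.IsFinite {A : Type} (M : TA A) : Prop := Finite M.Q ∧ M.trans.Finite

/-- Runs of a one-clock timed automaton between configurations. -/
inductive Steps {A : Type} (M : TA A) : M.Q × ℝ≥0 → TimedWord A → M.Q × ℝ≥0 → Prop
  | nil (c : M.Q × ℝ≥0) : Steps M c [] c
  | cons {q : M.Q} {ν t : ℝ≥0} {a : A} {w : TimedWord A} {c : M.Q × ℝ≥0}
      (θ : TTrans M.Q A) (hθ : θ ∈ M.trans) (hsrc : θ.src = q) (hlab : θ.lab = a)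
      (hg : θ.guard.sat (ν + t))
      (hrest : Steps M (θ.dst, if θ.reset then 0 else ν + t) w c) :
      Steps M (q, ν) ((t, a) :: w) c

/-- The language of `M` from a given configuration. -/
def TA.LangFrom {A : Type} (M : TA A) (c : M.Q × ℝ≥0) : Set (TimedWord A) :=
  {w | ∃ q' : M.Q, ∃ ν' : ℝ≥0, Steps M c w (q', ν') ∧ q' ∈ M.final}

/-- The language of `M` (from the initial configuration). -/
def TA.Lang {A : Type} (M : TA A) : Set (TimedWord A) := M.LangFrom (M.init, 0)

/-- Determinism: distinct transitions with the same source and letter have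
disjoint guards. -/
def TA.Deterministic {A : Type} (M : TA A) : Prop :=
  ∀ θ₁ ∈ M.trans, ∀ θ₂ ∈ M.trans, θ₁ ≠ θ₂ → θ₁.src = θ₂.src → θ₁.lab = θ₂.lab →
    ∀ x : ℝ≥0, ¬ (θ₁.guard.sat x ∧ θ₂.guard.sat x)

/-- Completeness: every timed word admits a run from the initial configuration. -/
def TA.Complete {A : Type} (M : TA A) : Prop :=
  ∀ w : TimedWord A, ∃ c : M.Q × ℝ≥0, Steps M (M.init, 0) w c

/-- A 1-IRTA: every resetting transition has an equality guard. -/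
def TA.IsIRTA {A : Type} (M : TA A) : Prop :=
  ∀ θ ∈ M.trans, θ.reset = true → ∃ m : ℕ, θ.guard = CC.eq m

/-- Guards allowed in a strict 1-IRTA with constant `K`. -/
def StrictGuard (K : ℕ) (φ : CC) : Prop :=
  (∃ m : ℕ, φ = CC.eq m) ∨ (∃ m : ℕ, φ = CC.and (CC.gt m) (CC.lt (m + 1))) ∨ φ = CC.gt K

/-- Strictness with constant `K`: every guard is of one of the allowed forms
and a guard is an equality iff the transition resets. -/
def TA.IsStrict {A : Type} (M : TA A) (K : ℕ) : Prop :=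
  ∀ θ ∈ M.trans, StrictGuard K θ.guard ∧ ((∃ m : ℕ, θ.guard = CC.eq m) ↔ θ.reset = true)

/-- All constants appearing in guards are at most `K`. -/
def TA.MaxConstLE {A : Type} (M : TA A) (K : ℕ) : Prop :=
  ∀ θ ∈ M.trans, θ.guard.maxConst ≤ K

/-- `M` reaches the same control state on reading `u` and `v` from the initial
configuration. -/
def TA.SameState {A : Type} (M : TA A) (u v : TimedWord A) : Prop :=
  ∃ q : M.Q, ∃ ν ν' : ℝ≥0, Steps M (M.init, 0) u (q, ν) ∧ Steps M (M.init, 0) v (q, ν')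

/-- A `K`-acceptor. -/
def IsKAcceptor {A : Type} (M : TA A) (K : ℕ) : Prop :=
  M.IsFinite ∧ M.Complete ∧ M.Deterministic ∧ M.IsIRTA ∧ M.IsStrict K ∧ M.MaxConstLE K ∧
    ∀ u v : TimedWord A, M.SameState u v → RegEq K (cKW K u) (cKW K v)

/-! ### Equivalences on timed words -/

/-- `L`-preservation of a relation on timed words. -/
def LPreserving {A : Type} (L : Set (TimedWord A)) (r : TimedWord A → TimedWord A → Prop) :
    Prop :=
  ∀ u v : TimedWord A, r u v → (u ∈ L ↔ v ∈ L)

/-- `K`-monotonicity of a relation on timed words. -/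
def KMonotonic {A : Type} (K : ℕ) (r : TimedWord A → TimedWord A → Prop) : Prop :=
  ∀ u v : TimedWord A, r u v →
    RegEq K (cKW K u) (cKW K v) ∧
      ∀ (a : A) (t t' : ℝ≥0), RegEq K (cKW K u + t) (cKW K v + t') →
        r (u ++ [(t, a)]) (v ++ [(t', a)])

/-- Finite index: there are finitely many classes `{v | r u v}`. -/
def FiniteIndex {A : Type} (r : TimedWord A → TimedWord A → Prop) : Prop :=
  Set.Finite (Set.range fun u : TimedWord A => {v : TimedWord A | r u v})

/-! ### The rescaling maps -/

/-- The bijection `f_{λ→λ'}` of the open unit interval. -/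
noncomputable def fScale (lam lam' t : ℝ≥0) : ℝ≥0 :=
  if t ≤ lam then (lam' / lam) * t else lam' + ((1 - lam') / (1 - lam)) * (t - lam)

/-- The new delay `t'` computed from the current clock values `y, y'` and delay `t`. -/
noncomputable def tauStep (K : ℕ) (y y' t : ℝ≥0) : ℝ≥0 :=
  if (IsNatVal y ∧ IsNatVal y') ∨ ((K : ℝ≥0) < y ∧ (K : ℝ≥0) < y') then t
  else (⌊t⌋₊ : ℝ≥0) + fScale (1 - fracPart y) (1 - fracPart y') (fracPart t)

/-- Auxiliary rescaling map on timestamps, carrying the current clock values. -/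
noncomputable def tauAux (K : ℕ) : ℝ≥0 → ℝ≥0 → Timestamp → Timestamp
  | _, _, [] => []
  | y, y', t :: d =>
      tauStep K y y' t ::
        tauAux K (resetStep K (y + t)) (resetStep K (y' + tauStep K y y' t)) d

/-- The rescaling map `τ_{x→x'}` on timestamps. -/
noncomputable def tau (K : ℕ) (x x' : ℝ≥0) (d : Timestamp) : Timestamp :=
  tauAux K (resetStep K x) (resetStep K x') d

/-- Auxiliary rescaling map on timed words. -/
noncomputable def tauWAux {A : Type} (K : ℕ) : ℝ≥0 → ℝ≥0 → TimedWord A → TimedWord A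
  | _, _, [] => []
  | y, y', (t, a) :: w =>
      (tauStep K y y' t, a) ::
        tauWAux K (resetStep K (y + t)) (resetStep K (y' + tauStep K y y' t)) w

/-- The rescaling map `τ_{x→x'}` on timed words. -/
noncomputable def tauW {A : Type} (K : ℕ) (x x' : ℝ≥0) (w : TimedWord A) : TimedWord A :=
  tauWAux K (resetStep K x) (resetStep K x') w

/-! ### Residuals and the syntactic equivalence -/

/-- The residual language `u^{-1}L`. -/
def residual {A : Type} (L : Set (TimedWord A)) (u : TimedWord A) : Set (TimedWord A) :=
  {w : TimedWord A | u ++ w ∈ L}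

/-- The syntactic equivalence `≈^{L,K}`. -/
def ApproxLK {A : Type} (L : Set (TimedWord A)) (K : ℕ) (u v : TimedWord A) : Prop :=
  RegEq K (cKW K u) (cKW K v) ∧
    (tauW K (cKW K u) (cKW K v)) '' (residual L u) = residual L v

/-! ### The automaton built from a monotonic equivalence -/

/-- The region guard `φ([t])`. -/
noncomputable def phiOf (K : ℕ) (t : ℝ≥0) : CC :=
  if t ≤ (K : ℝ≥0) then
    (if IsNatVal t then CC.eq ⌊t⌋₊ else CC.and (CC.gt ⌊t⌋₊) (CC.lt (⌊t⌋₊ + 1)))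
  else CC.gt K

/-- The automaton `A_≈` built from an equivalence `s` on timed words. -/
noncomputable def Aapprox {A : Type} (L : Set (TimedWord A)) (K : ℕ)
    (s : Setoid (TimedWord A)) : TA A where
  Q := Quotient s
  init := Quotient.mk s ([] : TimedWord A)
  final := {q : Quotient s | ∃ u : TimedWord A, q = Quotient.mk s u ∧ u ∈ L}
  trans := {θ : TTrans (Quotient s) A |
    ∃ (u : TimedWord A) (a : A) (t : ℝ≥0),
      θ.src = Quotient.mk s u ∧ θ.dst = Quotient.mk s (u ++ [(t, a)]) ∧ θ.lab = a ∧
      θ.guard = phiOf K (cKW K u + t) ∧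
      (θ.reset = true ↔ ∃ m : ℕ, m ≤ K ∧ cKW K u + t = (m : ℝ≥0))}

/-! ### Half-integral and small words -/

/-- Every delay has fractional part `0` or `1/2`. -/
def HalfIntegral {A : Type} (w : TimedWord A) : Prop :=
  ∀ p ∈ w, fracPart p.1 = 0 ∨ fracPart p.1 = 1 / 2

/-- Every delay is `< K + 1`. -/
def SmallWord {A : Type} (K : ℕ) (w : TimedWord A) : Prop :=
  ∀ p ∈ w, p.1 < (K : ℝ≥0) + 1

/-- The delays of `Σ_K`: half-integral values `≤ K + 1/2`. -/
def IsSigmaK (K : ℕ) (t : ℝ≥0) : Prop :=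
  (fracPart t = 0 ∨ fracPart t = 1 / 2) ∧ t ≤ (K : ℝ≥0) + 1 / 2

/-- Words over `Σ_K` (small half-integral words). -/
def SigmaWord {A : Type} (K : ℕ) (w : TimedWord A) : Prop :=
  ∀ p ∈ w, IsSigmaK K p.1



/-! ### `K`-acceptors with their region representatives -/

/-- A `K`-acceptor bundled with the half-integral representative of the
unique region of each state. -/
structure KAcc (A : Type) (K : ℕ) where
  M : TA A
  acc : IsKAcceptor M K
  reg : M.Q → ℝ≥0
  regHalf : ∀ q : M.Q, fracPart (reg q) = 0 ∨ fracPart (reg q) = 1 / 2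
  regLe : ∀ q : M.Q, reg q ≤ (K : ℝ≥0) + 1 / 2
  regSpec : ∀ (w : TimedWord A) (q : M.Q) (x : ℝ≥0),
    Steps M (M.init, 0) w (q, x) → RegEq K x (reg q)

/-- The minimization equivalences `∼^i` on the states of a `K`-acceptor. -/
def simEq {A : Type} {K : ℕ} (B : KAcc A K) : ℕ → B.M.Q → B.M.Q → Prop
  | 0, p, q => B.reg p = B.reg q ∧ (p ∈ B.M.final ↔ q ∈ B.M.final)
  | i + 1, p, q => simEq B i p q ∧
      ∀ (t : ℝ≥0) (a : A), IsSigmaK K t →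
        ∀ θ₁ θ₂ : TTrans B.M.Q A, θ₁ ∈ B.M.trans → θ₂ ∈ B.M.trans →
          θ₁.src = p → θ₂.src = q → θ₁.lab = a → θ₂.lab = a →
          θ₁.guard = phiOf K t → θ₂.guard = phiOf K t →
          simEq B i θ₁.dst θ₂.dst

/-- The quotient automaton `B/∼^m`. -/
noncomputable def quotTA {A : Type} {K : ℕ} (B : KAcc A K) (m : ℕ) : TA A where
  Q := Quot (simEq B m)
  init := Quot.mk (simEq B m) B.M.init
  final := {c : Quot (simEq B m) | ∃ q ∈ B.M.final, c = Quot.mk (simEq B m) q}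
  trans := {θ : TTrans (Quot (simEq B m)) A |
    ∃ θ₀ ∈ B.M.trans,
      θ.src = Quot.mk (simEq B m) θ₀.src ∧ θ.dst = Quot.mk (simEq B m) θ₀.dst ∧
      θ.lab = θ₀.lab ∧ θ.guard = θ₀.guard ∧ θ.reset = θ₀.reset}

/-! ### Observation tables -/

/-- An observation table over `Σ_K`. -/
structure ObsTable (A : Type) (K : ℕ) where
  U1 : Set (TimedWord A)
  E : Set (TimedWord A)
  val : TimedWord A → TimedWord A → Bool
  U1fin : U1.Finite
  Efin : E.Finite
  U1sigma : ∀ u ∈ U1, SigmaWord K u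
  Esigma : ∀ e ∈ E, SigmaWord K e
  epsU1 : ([] : TimedWord A) ∈ U1
  prefixClosed : ∀ (u : TimedWord A) (x : ℝ≥0 × A), u ++ [x] ∈ U1 → u ∈ U1
  epsE : ([] : TimedWord A) ∈ E
  suffixClosed : ∀ (x : ℝ≥0 × A) (e : TimedWord A), x :: e ∈ E → e ∈ E

/-- The set `U2` of one-letter `Σ_K`-extensions of `U1`. -/
def obsU2 {A : Type} {K : ℕ} (T : ObsTable A K) : Set (TimedWord A) :=
  {w : TimedWord A | ∃ u ∈ T.U1, ∃ (t : ℝ≥0) (a : A), IsSigmaK K t ∧ w = u ++ [(t, a)]}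

/-- `R(u)`: the row of `u` (restricted to `E`) together with `c^K_⊤(u)`. -/
noncomputable def Rof {A : Type} {K : ℕ} (T : ObsTable A K) (u : TimedWord A) :
    ({e : TimedWord A // e ∈ T.E} → Bool) × WithTop ℝ≥0 :=
  (fun e => T.val u e.1, cKTop K u)

/-- The table is closed. -/
def ObsTable.Closed {A : Type} {K : ℕ} (T : ObsTable A K) : Prop :=
  ∀ w ∈ obsU2 T, ∃ u ∈ T.U1, Rof T w = Rof T u

/-- The table is consistent. -/
def ObsTable.Consistent {A : Type} {K : ℕ} (T : ObsTable A K) : Prop :=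
  ∀ u ∈ T.U1, ∀ w ∈ T.U1, Rof T u = Rof T w →
    ∀ (t : ℝ≥0) (a : A), IsSigmaK K t → Rof T (u ++ [(t, a)]) = Rof T (w ++ [(t, a)])

/-- The automaton `A_𝒯` induced by a (closed and consistent) observation table. -/
noncomputable def ATable {A : Type} {K : ℕ} (T : ObsTable A K) : TA A where
  Q := {f : ({e : TimedWord A // e ∈ T.E} → Bool) × WithTop ℝ≥0 // ∃ u ∈ T.U1, f = Rof T u}
  init := ⟨Rof T [], ⟨[], T.epsU1, rfl⟩⟩
  final := {q | ∃ u ∈ T.U1, q.1 = Rof T u ∧ T.val u [] = true}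
  trans := {θ | ∃ u ∈ T.U1, ∃ (t : ℝ≥0) (a : A), IsSigmaK K t ∧
      θ.src.1 = Rof T u ∧ θ.dst.1 = Rof T (u ++ [(t, a)]) ∧ θ.lab = a ∧
      θ.guard = phiOf K (cKW K u + t) ∧
      (θ.reset = true ↔ ∃ m : ℕ, m ≤ K ∧ cKW K u + t = (m : ℝ≥0))}

/-- A `K`-acceptor is consistent with the observation table `𝒯`. -/
def ConsistentWith {A : Type} {K : ℕ} (M : TA A) (T : ObsTable A K) : Prop :=
  ∀ w : TimedWord A, (w ∈ T.U1 ∨ w ∈ obsU2 T) → ∀ e ∈ T.E,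
    ∀ (q : M.Q) (ν : ℝ≥0), Steps M (M.init, 0) (w ++ e) (q, ν) →
      (q ∈ M.final ↔ T.val w e = true)

/-- Isomorphism of one-clock timed automata. -/
structure TAIso {A : Type} (M N : TA A) where
  toEquiv : M.Q ≃ N.Q
  init_eq : toEquiv M.init = N.init
  final_iff : ∀ q : M.Q, q ∈ M.final ↔ toEquiv q ∈ N.final
  trans_iff : ∀ θ : TTrans M.Q A,
    θ ∈ M.trans ↔
      (⟨toEquiv θ.src, toEquiv θ.dst, θ.lab, θ.guard, θ.reset⟩ : TTrans N.Q A) ∈ N.trans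



/-!
Call two timed words region-equivalent from clock values `y` and `y'` (`RegEqWord`) when they
carry the same letters and, with the clock evolving as in `c^K`, visit region-equivalent clock
values at every step. The rescaling `τ_{x→x'}` sends each word to a region-equivalent one and
composes well, so `≈^{L,K}` is an equivalence, and `u ≈ v` holds as soon as
`c^K(u) ≡^K c^K(v)` and region-equivalent continuations of `u` and `v` are accepted together.

(⇒) In a 1-IRTA whose constants are at most `K`, resets only happen at integer clock values
`≤ K`, so every clock value reached on `u` is `c^K(u)` plus an integer, and a run on a word can be
replayed on any region-equivalent word. Hence residuals are closed under region-equivalence,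
which gives monotonicity, and `u⁻¹L` is determined by finitely many data: the region of `c^K(u)`,
the reachable pairs (state, integer offset `≤ K`) and the states reachable with clock `> K`.

(⇐) By monotonicity the automaton on the classes of `≈`, guarded by the region of `c^K(u) + t`,
reads `w` from the class of `u` into the class of `uw` with clock `c^K(uw)`; so it accepts `L`,
and it is finite because `≈` has finite index.
-/

lemma floor_add_fracPart (x : ℝ≥0) : (⌊x⌋₊ : ℝ≥0) + fracPart x = x :=
  add_tsub_cancel_of_le (Nat.floor_le zero_le)

lemma fracPart_lt_one (x : ℝ≥0) : fracPart x < 1 := by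
  rw [fracPart, tsub_lt_iff_left (Nat.floor_le zero_le)]
  exact Nat.lt_floor_add_one x

lemma fracPart_eq_zero_iff {x : ℝ≥0} : fracPart x = 0 ↔ IsNatVal x := by
  refine ⟨fun h => ⟨⌊x⌋₊, ?_⟩, ?_⟩
  · rw [← floor_add_fracPart x, h, add_zero, Nat.floor_natCast]
  · rintro ⟨m, rfl⟩
    simp [fracPart]

lemma fracPart_add_natCast (x : ℝ≥0) (c : ℕ) : fracPart (x + c) = fracPart x := by
  rw [fracPart, fracPart, Nat.floor_add_natCast zero_le, Nat.cast_add,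
    add_tsub_add_eq_tsub_right]

lemma floor_natCast_add {n : ℕ} {f : ℝ≥0} (hf : f < 1) : ⌊(n : ℝ≥0) + f⌋₊ = n := by
  rw [add_comm, Nat.floor_add_natCast zero_le, Nat.floor_eq_zero.2 hf, zero_add]

lemma fracPart_natCast_add {n : ℕ} {f : ℝ≥0} (hf : f < 1) : fracPart ((n : ℝ≥0) + f) = f := by
  rw [fracPart, floor_natCast_add hf, add_tsub_cancel_left]

lemma eq_natCast_iff {m : ℕ} {x : ℝ≥0} : x = m ↔ ⌊x⌋₊ = m ∧ fracPart x = 0 := by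
  refine ⟨?_, fun ⟨h1, h2⟩ => ?_⟩
  · rintro rfl
    simp [fracPart]
  · rw [← floor_add_fracPart x, h1, h2, add_zero]

section FloorEq

variable {x y : ℝ≥0} (m : ℕ)

lemma lt_natCast_iff_of_floor_eq (hfl : ⌊x⌋₊ = ⌊y⌋₊) : x < m ↔ y < m := by
  rw [← Nat.floor_lt zero_le, ← Nat.floor_lt zero_le, hfl]

lemma eq_natCast_iff_of_floor_eq (hfl : ⌊x⌋₊ = ⌊y⌋₊) (hfr : fracPart x = 0 ↔ fracPart y = 0) :
    x = m ↔ y = m := by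
  rw [eq_natCast_iff, eq_natCast_iff, hfl, hfr]

lemma natCast_lt_iff_of_floor_eq (hfl : ⌊x⌋₊ = ⌊y⌋₊) (hfr : fracPart x = 0 ↔ fracPart y = 0) :
    (m : ℝ≥0) < x ↔ (m : ℝ≥0) < y := by
  rw [← not_le, ← not_le, le_iff_lt_or_eq, le_iff_lt_or_eq, lt_natCast_iff_of_floor_eq m hfl,
    eq_natCast_iff_of_floor_eq m hfl hfr]

end FloorEq

namespace RegEq

variable {K : ℕ} {x y z : ℝ≥0}

@[refl] lemma refl (K : ℕ) (x : ℝ≥0) : RegEq K x x := Or.inl ⟨rfl, Iff.rfl⟩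

@[symm] lemma symm (h : RegEq K x y) : RegEq K y x :=
  h.imp (fun h => ⟨h.1.symm, h.2.symm⟩) And.symm

lemma natCast_lt (h : RegEq K x y) (hx : (K : ℝ≥0) < x) : (K : ℝ≥0) < y := by
  rcases h with ⟨hfl, hfr⟩ | ⟨-, hy⟩
  · exact (natCast_lt_iff_of_floor_eq K hfl hfr).1 hx
  · exact hy

lemma trans (h₁ : RegEq K x y) (h₂ : RegEq K y z) : RegEq K x z := by
  rcases h₁ with ⟨a₁, a₂⟩ | ⟨a₁, a₂⟩
  · rcases h₂ with ⟨b₁, b₂⟩ | ⟨b₁, b₂⟩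
    · exact Or.inl ⟨a₁.trans b₁, a₂.trans b₂⟩
    · exact Or.inr ⟨(symm (Or.inl ⟨a₁, a₂⟩)).natCast_lt b₁, b₂⟩
  · exact Or.inr ⟨a₁, h₂.natCast_lt a₂⟩

lemma eq_natCast {m : ℕ} (h : RegEq K x y) (hx : x = m) (hm : m ≤ K) : y = m := by
  rcases h with ⟨hfl, hfr⟩ | ⟨hx', -⟩
  · exact (eq_natCast_iff_of_floor_eq m hfl hfr).1 hx
  · exact absurd (hx ▸ hx') (not_lt.2 (Nat.cast_le.2 hm))

lemma add_natCast (h : RegEq K x y) (c : ℕ) : RegEq K (x + c) (y + c) := by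
  rcases h with ⟨hfl, hfr⟩ | ⟨hx, hy⟩
  · left
    rw [Nat.floor_add_natCast zero_le, Nat.floor_add_natCast zero_le, hfl,
      fracPart_add_natCast, fracPart_add_natCast]
    exact ⟨rfl, hfr⟩
  · exact Or.inr ⟨hx.trans_le le_self_add, hy.trans_le le_self_add⟩

lemma resetVal_iff (h : RegEq K x y) :
    (∃ m : ℕ, m ≤ K ∧ x = m) ↔ ∃ m : ℕ, m ≤ K ∧ y = m :=
  ⟨fun ⟨m, hm, hx⟩ => ⟨m, hm, h.eq_natCast hx hm⟩,
    fun ⟨m, hm, hy⟩ => ⟨m, hm, h.symm.eq_natCast hy hm⟩⟩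

lemma resetStep (h : RegEq K x y) : RegEq K (resetStep K x) (resetStep K y) := by
  unfold IRTA.resetStep
  split_ifs with hx hy hy
  · exact refl K 0
  · exact absurd (h.resetVal_iff.1 hx) hy
  · exact absurd (h.resetVal_iff.2 hy) hx
  · exact h

end RegEq

lemma regEq_of_mem_Ioo {K m : ℕ} {x y : ℝ≥0} (hx : x ∈ Set.Ioo (m : ℝ≥0) (m + 1))
    (hy : y ∈ Set.Ioo (m : ℝ≥0) (m + 1)) : RegEq K x y := by
  have floor_eq {z : ℝ≥0} (hz : z ∈ Set.Ioo (m : ℝ≥0) (m + 1)) : ⌊z⌋₊ = m :=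
    Nat.floor_eq_iff zero_le |>.2 ⟨hz.1.le, hz.2⟩
  have frac_ne {z : ℝ≥0} (hz : z ∈ Set.Ioo (m : ℝ≥0) (m + 1)) : fracPart z ≠ 0 := fun h0 =>
    hz.1.ne' (eq_natCast_iff.2 ⟨floor_eq hz, h0⟩)
  exact Or.inl ⟨(floor_eq hx).trans (floor_eq hy).symm, iff_of_false (frac_ne hx) (frac_ne hy)⟩

lemma resetStep_zero (K : ℕ) : resetStep K 0 = 0 :=
  if_pos ⟨0, Nat.zero_le K, Nat.cast_zero.symm⟩

lemma resetStep_of_lt {K : ℕ} {x : ℝ≥0} (hx : (K : ℝ≥0) < x) : resetStep K x = x :=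
  if_neg fun ⟨_, hm, hxm⟩ => (hxm ▸ hx).not_ge (Nat.cast_le.2 hm)

lemma resetStep_idem (K : ℕ) (x : ℝ≥0) : resetStep K (resetStep K x) = resetStep K x := by
  by_cases h : ∃ m : ℕ, m ≤ K ∧ x = m
  · rw [show resetStep K x = 0 from if_pos h, resetStep_zero]
  · rw [show resetStep K x = x from if_neg h, show resetStep K x = x from if_neg h]

section fScale

variable {lam lam' lam'' s : ℝ≥0}

lemma fScale_strictMono (hl : 0 < lam) (hl1 : lam < 1) (hl' : 0 < lam') (hl1' : lam' < 1) :
    StrictMono (fScale lam lam') := by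
  have hslope : 0 < (1 - lam') / (1 - lam) := div_pos (tsub_pos_of_lt hl1') (tsub_pos_of_lt hl1)
  intro a b hab
  unfold fScale
  split_ifs with ha hb hb
  · exact mul_lt_mul_of_pos_left hab (div_pos hl' hl)
  · calc lam' / lam * a ≤ lam' / lam * lam := by gcongr
      _ = lam' := div_mul_cancel₀ lam' hl.ne'
      _ < _ := lt_add_of_pos_right _ (mul_pos hslope (tsub_pos_of_lt (not_le.1 hb)))
  · exact absurd (hab.le.trans hb) ha
  · exact (add_lt_add_iff_left _).2 <|
      mul_lt_mul_of_pos_left (tsub_lt_tsub_right_of_le (not_le.1 ha).le hab) hslope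

lemma fScale_left (hl : 0 < lam) : fScale lam lam' lam = lam' := by
  rw [fScale, if_pos le_rfl, div_mul_cancel₀ lam' hl.ne']

lemma fScale_one (hl1 : lam < 1) (hl1' : lam' ≤ 1) : fScale lam lam' 1 = 1 := by
  rw [fScale, if_neg (not_le.2 hl1), div_mul_cancel₀ _ (tsub_pos_of_lt hl1).ne',
    add_tsub_cancel_of_le hl1']

lemma fScale_self (hl : 0 < lam) (hl1 : lam < 1) : fScale lam lam s = s := by
  unfold fScale
  split_ifs with h
  · rw [div_self hl.ne', one_mul]
  · rw [div_self (tsub_pos_of_lt hl1).ne', one_mul, add_tsub_cancel_of_le (not_le.1 h).le]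

lemma fScale_comp (hl : 0 < lam) (hl1 : lam < 1) (hl' : 0 < lam') (hl1' : lam' < 1) :
    fScale lam' lam'' (fScale lam lam' s) = fScale lam lam'' s := by
  have hmono := fScale_strictMono hl hl1 hl' hl1'
  by_cases h : s ≤ lam
  · have h' : fScale lam lam' s ≤ lam' := (hmono.monotone h).trans_eq (fScale_left hl)
    rw [fScale, if_pos h', fScale, if_pos h, fScale, if_pos h, ← mul_assoc, div_mul_div_comm,
      mul_comm lam'' lam', mul_div_mul_left _ _ hl'.ne']
  · have h' : ¬ fScale lam lam' s ≤ lam' :=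
      not_le.2 ((fScale_left hl).symm.trans_lt (hmono (not_le.1 h)))
    rw [fScale, if_neg h', fScale, if_neg h, fScale, if_neg h, add_tsub_cancel_left, ← mul_assoc,
      div_mul_div_comm, mul_comm (1 - lam'') (1 - lam'),
      mul_div_mul_left _ _ (tsub_pos_of_lt hl1').ne']

end fScale

lemma regEq_natCast_add {K n : ℕ} {z z' : ℝ≥0} (h0 : z ≠ 0) (h0' : z' ≠ 0) (h2 : z < 2)
    (h2' : z' < 2) (hlt : z < 1 ↔ z' < 1) (heq : z = 1 ↔ z' = 1) :
    RegEq K (n + z) (n + z') := by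
  rcases lt_trichotomy z 1 with hz | rfl | hz
  · have mem {w : ℝ≥0} (h0 : w ≠ 0) (h1 : w < 1) : (n : ℝ≥0) + w ∈ Set.Ioo (n : ℝ≥0) (n + 1) :=
      ⟨lt_add_of_pos_right _ (pos_iff_ne_zero.2 h0), by gcongr⟩
    exact regEq_of_mem_Ioo (mem h0 hz) (mem h0' (hlt.1 hz))
  · rw [← heq.1 rfl]
  · have hz' : 1 < z' :=
      lt_of_le_of_ne (not_lt.1 fun h => hz.not_gt (hlt.2 h)) fun h => hz.ne' (heq.2 h.symm)
    have mem {w : ℝ≥0} (h1 : 1 < w) (h2 : w < 2) :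
        (n : ℝ≥0) + w ∈ Set.Ioo ((n + 1 : ℕ) : ℝ≥0) ((n + 1 : ℕ) + 1) := by
      push_cast
      refine ⟨by gcongr, ?_⟩
      rw [add_assoc, one_add_one_eq_two]
      gcongr
    exact regEq_of_mem_Ioo (mem hz h2) (mem hz' h2')

lemma one_sub_fracPart_pos (y : ℝ≥0) : 0 < 1 - fracPart y :=
  tsub_pos_of_lt (fracPart_lt_one y)

lemma one_sub_fracPart_lt_one {y : ℝ≥0} (hy : fracPart y ≠ 0) : 1 - fracPart y < 1 :=
  tsub_lt_self one_pos (pos_iff_ne_zero.2 hy)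

section tauStep

variable {K : ℕ} {y y' y'' : ℝ≥0}

lemma RegEq.floor_eq_of_not_trivial (h : RegEq K y y')
    (hP : ¬ ((IsNatVal y ∧ IsNatVal y') ∨ ((K : ℝ≥0) < y ∧ (K : ℝ≥0) < y'))) :
    ⌊y⌋₊ = ⌊y'⌋₊ ∧ fracPart y ≠ 0 ∧ fracPart y' ≠ 0 := by
  rcases h with ⟨hfl, hfr⟩ | hK
  · refine ⟨hfl, fun h0 => hP (Or.inl ?_), fun h0 => hP (Or.inl ?_)⟩ <;>
      exact ⟨fracPart_eq_zero_iff.1 (by tauto), fracPart_eq_zero_iff.1 (by tauto)⟩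
  · exact absurd (Or.inr hK) hP

lemma RegEq.eq_of_eq_natCast (h : RegEq K y y')
    (hK : ¬ ((K : ℝ≥0) < y ∧ (K : ℝ≥0) < y')) {m : ℕ} (hm : y = m) : y' = m := by
  rcases h with ⟨hfl, hfr⟩ | h
  · exact (eq_natCast_iff_of_floor_eq m hfl hfr).1 hm
  · exact absurd h hK

lemma fScale_fracPart_lt_one (hy : fracPart y ≠ 0) (hy' : fracPart y' ≠ 0) (t : ℝ≥0) :
    fScale (1 - fracPart y) (1 - fracPart y') (fracPart t) < 1 := by
  have hmono := fScale_strictMono (one_sub_fracPart_pos y) (one_sub_fracPart_lt_one hy)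
    (one_sub_fracPart_pos y') (one_sub_fracPart_lt_one hy')
  exact (hmono (fracPart_lt_one t)).trans_eq (fScale_one (one_sub_fracPart_lt_one hy) tsub_le_self)

lemma RegEq.add_tauStep (h : RegEq K y y') (t : ℝ≥0) :
    RegEq K (y + t) (y' + tauStep K y y' t) := by
  unfold tauStep
  split_ifs with hP
  · by_cases hK : (K : ℝ≥0) < y ∧ (K : ℝ≥0) < y'
    · exact Or.inr ⟨hK.1.trans_le le_self_add, hK.2.trans_le le_self_add⟩
    · obtain ⟨m, hm⟩ := (hP.resolve_right hK).1
      rw [hm, h.eq_of_eq_natCast hK hm]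
  · obtain ⟨hfl, hfy, hfy'⟩ := h.floor_eq_of_not_trivial hP
    set f := fScale (1 - fracPart y) (1 - fracPart y')
    have hmono : StrictMono f := fScale_strictMono (one_sub_fracPart_pos y)
      (one_sub_fracPart_lt_one hfy) (one_sub_fracPart_pos y') (one_sub_fracPart_lt_one hfy')
    have hf : f (1 - fracPart y) = 1 - fracPart y' := fScale_left (one_sub_fracPart_pos y)
    have hft : f (fracPart t) < 1 := fScale_fracPart_lt_one hfy hfy' t
    have lt_iff {a b : ℝ≥0} : a + b < 1 ↔ b < 1 - a := lt_tsub_iff_left.symm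
    have eq_iff {a b : ℝ≥0} (ha : a < 1) : a + b = 1 ↔ b = 1 - a := by
      rw [eq_tsub_iff_add_eq_of_le ha.le, add_comm]
    -- `f` sends `1 - {y}` to `1 - {y'}`, so both fractional sums cross `1` together.
    have key : RegEq K (⌊y⌋₊ + (fracPart y + fracPart t))
        (⌊y⌋₊ + (fracPart y' + f (fracPart t))) := by
      refine regEq_natCast_add (by simp [hfy]) (by simp [hfy']) ?_ ?_ ?_ ?_
      · exact (add_lt_add (fracPart_lt_one y) (fracPart_lt_one t)).trans_eq one_add_one_eq_two
      · exact (add_lt_add (fracPart_lt_one y') hft).trans_eq one_add_one_eq_two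
      · rw [lt_iff, lt_iff, ← hf, hmono.lt_iff_lt]
      · rw [eq_iff (fracPart_lt_one y), eq_iff (fracPart_lt_one y'), ← hf, hmono.injective.eq_iff]
    convert key.add_natCast ⌊t⌋₊ using 1
    · conv_lhs => rw [← floor_add_fracPart y, ← floor_add_fracPart t]
      ring
    · conv_lhs => rw [← floor_add_fracPart y', ← hfl]
      ring

lemma tauStep_self (K : ℕ) (y t : ℝ≥0) : tauStep K y y t = t := by
  unfold tauStep
  split_ifs with hP
  · rfl
  · obtain ⟨-, hfy, -⟩ := (RegEq.refl K y).floor_eq_of_not_trivial hP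
    rw [fScale_self (one_sub_fracPart_pos y) (one_sub_fracPart_lt_one hfy), floor_add_fracPart]

lemma tauStep_comp (h₁ : RegEq K y y') (h₂ : RegEq K y' y'') (t : ℝ≥0) :
    tauStep K y' y'' (tauStep K y y' t) = tauStep K y y'' t := by
  by_cases hK : (K : ℝ≥0) < y ∧ (K : ℝ≥0) < y'
  · have hK'' := h₂.natCast_lt hK.2
    have triv {a b : ℝ≥0} (ha : (K : ℝ≥0) < a) (hb : (K : ℝ≥0) < b) (t : ℝ≥0) :
        tauStep K a b t = t := if_pos (Or.inr ⟨ha, hb⟩)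
    rw [triv hK.1 hK.2, triv hK.2 hK'', triv hK.1 hK'']
  by_cases hn : IsNatVal y ∧ IsNatVal y'
  · obtain ⟨m, hm⟩ := hn.1
    obtain rfl : y = y' := hm.trans (h₁.eq_of_eq_natCast hK hm).symm
    rw [tauStep_self]
  have hP : ¬ ((IsNatVal y ∧ IsNatVal y') ∨ ((K : ℝ≥0) < y ∧ (K : ℝ≥0) < y')) := by tauto
  obtain ⟨-, hfy, hfy'⟩ := h₁.floor_eq_of_not_trivial hP
  have hP₂ : ¬ ((IsNatVal y' ∧ IsNatVal y'') ∨ ((K : ℝ≥0) < y' ∧ (K : ℝ≥0) < y'')) := by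
    rintro (⟨hn', -⟩ | ⟨hy', -⟩)
    · exact hfy' (fracPart_eq_zero_iff.2 hn')
    · exact hK ⟨h₁.symm.natCast_lt hy', hy'⟩
  have hP₃ : ¬ ((IsNatVal y ∧ IsNatVal y'') ∨ ((K : ℝ≥0) < y ∧ (K : ℝ≥0) < y'')) := by
    rintro (⟨hn', -⟩ | ⟨hy, -⟩)
    · exact hfy (fracPart_eq_zero_iff.2 hn')
    · exact hK ⟨hy, h₁.natCast_lt hy⟩
  have hft := fScale_fracPart_lt_one hfy hfy' t
  have ht : tauStep K y y' t =
      ⌊t⌋₊ + fScale (1 - fracPart y) (1 - fracPart y') (fracPart t) := if_neg hP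
  rw [ht, tauStep, if_neg hP₂, tauStep, if_neg hP₃, floor_natCast_add hft,
    fracPart_natCast_add hft, fScale_comp (one_sub_fracPart_pos y) (one_sub_fracPart_lt_one hfy)
      (one_sub_fracPart_pos y') (one_sub_fracPart_lt_one hfy')]

end tauStep

section Words

variable {A : Type} {K : ℕ}

lemma tauWAux_cons (y y' t : ℝ≥0) (a : A) (w : TimedWord A) :
    tauWAux K y y' ((t, a) :: w) =
      (tauStep K y y' t, a) ::
        tauWAux K (resetStep K (y + t)) (resetStep K (y' + tauStep K y y' t)) w := rfl

lemma tauWAux_self (y : ℝ≥0) (w : TimedWord A) : tauWAux K y y w = w := by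
  induction w generalizing y with
  | nil => rfl
  | cons p w ih => rw [tauWAux_cons, tauStep_self, ih]

lemma tauWAux_comp {y y' y'' : ℝ≥0} (h₁ : RegEq K y y') (h₂ : RegEq K y' y'')
    (w : TimedWord A) : tauWAux K y' y'' (tauWAux K y y' w) = tauWAux K y y'' w := by
  induction w generalizing y y' y'' with
  | nil => rfl
  | cons p w ih =>
    have h₂' := (h₂.add_tauStep (tauStep K y y' p.1)).resetStep
    rw [tauStep_comp h₁ h₂] at h₂'
    rw [tauWAux_cons, tauWAux_cons, tauWAux_cons, tauStep_comp h₁ h₂,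
      ih (h₁.add_tauStep p.1).resetStep h₂']

lemma tauWAux_inv {y y' : ℝ≥0} (h : RegEq K y y') (w : TimedWord A) :
    tauWAux K y' y (tauWAux K y y' w) = w := by
  rw [tauWAux_comp h h.symm, tauWAux_self]

lemma mem_image_tauWAux {y y' : ℝ≥0} (h : RegEq K y y') {S : Set (TimedWord A)}
    {z : TimedWord A} : z ∈ tauWAux K y y' '' S ↔ tauWAux K y' y z ∈ S :=
  ⟨fun ⟨w, hw, hwz⟩ => hwz ▸ (tauWAux_inv h w).symm ▸ hw,
    fun hz => ⟨_, hz, tauWAux_inv h.symm z⟩⟩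

lemma cKW_append_singleton (u : TimedWord A) (t : ℝ≥0) (a : A) :
    cKW K (u ++ [(t, a)]) = resetStep K (cKW K u + t) := by
  have cKAux_append (v : ℝ≥0) (d₁ d₂ : Timestamp) :
      cKAux K v (d₁ ++ d₂) = cKAux K (cKAux K v d₁) d₂ := by
    induction d₁ generalizing v with
    | nil => rfl
    | cons t d ih => exact ih _
  rw [cKW, cK, List.map_append, cKAux_append]
  rfl

lemma resetStep_cKW (u : TimedWord A) : resetStep K (cKW K u) = cKW K u := by
  induction u using List.reverseRecOn with
  | nil => exact resetStep_zero K
  | append_singleton u p _ => rw [cKW_append_singleton, resetStep_idem]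

lemma tauW_cKW (u v : TimedWord A) :
    tauW K (cKW K u) (cKW K v) = tauWAux (A := A) K (cKW K u) (cKW K v) := by
  funext w
  rw [tauW, resetStep_cKW, resetStep_cKW]

end Words

inductive RegEqWord {A : Type} (K : ℕ) : ℝ≥0 → ℝ≥0 → TimedWord A → TimedWord A → Prop
  | nil (y y' : ℝ≥0) : RegEqWord K y y' [] []
  | cons {y y' t t' : ℝ≥0} {a : A} {w w' : TimedWord A} :
      RegEq K (y + t) (y' + t') →
      RegEqWord K (resetStep K (y + t)) (resetStep K (y' + t')) w w' →
      RegEqWord K y y' ((t, a) :: w) ((t', a) :: w')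

namespace RegEqWord

variable {A : Type} {K : ℕ} {y y' y'' : ℝ≥0} {w w' w'' : TimedWord A}

lemma refl (K : ℕ) (y : ℝ≥0) (w : TimedWord A) : RegEqWord K y y w w := by
  induction w generalizing y with
  | nil => exact nil y y
  | cons p w ih => exact cons (RegEq.refl K _) (ih _)

lemma symm (h : RegEqWord K y y' w w') : RegEqWord K y' y w' w := by
  induction h with
  | nil y y' => exact nil y' y
  | cons hreg _ ih => exact cons hreg.symm ih

lemma trans (h₁ : RegEqWord K y y' w w') (h₂ : RegEqWord K y' y'' w' w'') :
    RegEqWord K y y'' w w'' := by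
  induction h₁ generalizing y'' w'' with
  | nil => cases h₂; exact nil _ _
  | cons hreg _ ih =>
    cases h₂ with
    | cons hreg₂ h₂ => exact cons (hreg.trans hreg₂) (ih h₂)

lemma of_tauWAux (h : RegEq K y y') (w : TimedWord A) : RegEqWord K y y' w (tauWAux K y y' w) := by
  induction w generalizing y y' with
  | nil => exact nil y y'
  | cons p w ih => exact cons (h.add_tauStep p.1) (ih (h.add_tauStep p.1).resetStep)

lemma of_lt (hy : (K : ℝ≥0) < y) (hy' : (K : ℝ≥0) < y') (w : TimedWord A) :
    RegEqWord K y y' w w := by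
  induction w generalizing y y' with
  | nil => exact nil y y'
  | cons p w ih =>
    have hyt : (K : ℝ≥0) < y + p.1 := hy.trans_le le_self_add
    have hyt' : (K : ℝ≥0) < y' + p.1 := hy'.trans_le le_self_add
    refine cons (Or.inr ⟨hyt, hyt'⟩) ?_
    rw [resetStep_of_lt hyt, resetStep_of_lt hyt']
    exact ih hyt hyt'

end RegEqWord

section Approx

variable {A : Type} {L : Set (TimedWord A)} {K : ℕ} {u v w : TimedWord A}

lemma mem_residual_append_singleton {t : ℝ≥0} {a : A} {z : TimedWord A} :
    z ∈ residual L (u ++ [(t, a)]) ↔ (t, a) :: z ∈ residual L u := by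
  simp [residual]

namespace ApproxLK

lemma refl (L : Set (TimedWord A)) (K : ℕ) (u : TimedWord A) : ApproxLK L K u u := by
  refine ⟨RegEq.refl K _, ?_⟩
  rw [tauW_cKW]
  simp only [tauWAux_self, Set.image_id']

lemma symm (h : ApproxLK L K u v) : ApproxLK L K v u := by
  obtain ⟨hreg, himg⟩ := h
  refine ⟨hreg.symm, ?_⟩
  rw [tauW_cKW] at himg ⊢
  rw [← himg, Set.image_image]
  simp only [tauWAux_inv hreg, Set.image_id']

lemma trans (h₁ : ApproxLK L K u v) (h₂ : ApproxLK L K v w) : ApproxLK L K u w := by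
  obtain ⟨hreg₁, himg₁⟩ := h₁
  obtain ⟨hreg₂, himg₂⟩ := h₂
  refine ⟨hreg₁.trans hreg₂, ?_⟩
  rw [tauW_cKW] at himg₁ himg₂ ⊢
  rw [← himg₂, ← himg₁, Set.image_image]
  simp only [tauWAux_comp hreg₁ hreg₂]

lemma mem_iff (h : ApproxLK L K u v) : u ∈ L ↔ v ∈ L := by
  have hres : ∀ x : TimedWord A, x ∈ L ↔ [] ∈ residual L x := by simp [residual]
  rw [hres, hres, ← h.2, tauW_cKW, mem_image_tauWAux h.1]
  rfl

end ApproxLK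

def approxSetoid (L : Set (TimedWord A)) (K : ℕ) : Setoid (TimedWord A) :=
  ⟨ApproxLK L K, ⟨ApproxLK.refl L K, ApproxLK.symm, ApproxLK.trans⟩⟩

lemma approxLK_of_regEqWord (hreg : RegEq K (cKW K u) (cKW K v))
    (h : ∀ w w', RegEqWord K (cKW K u) (cKW K v) w w' →
      (w ∈ residual L u ↔ w' ∈ residual L v)) : ApproxLK L K u v := by
  refine ⟨hreg, ?_⟩
  ext z
  rw [tauW_cKW, mem_image_tauWAux hreg]
  exact h _ _ (RegEqWord.of_tauWAux hreg.symm z).symm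

def ResidualsRegClosed (L : Set (TimedWord A)) (K : ℕ) : Prop :=
  ∀ u w w' : TimedWord A, RegEqWord K (cKW K u) (cKW K u) w w' →
    w ∈ residual L u → w' ∈ residual L u

lemma ApproxLK.mem_residual_of_regEqWord (hL : ResidualsRegClosed L K) (h : ApproxLK L K u v)
    {w' : TimedWord A} (hw : RegEqWord K (cKW K u) (cKW K v) w w') (hwu : w ∈ residual L u) :
    w' ∈ residual L v := by
  have hτ : tauWAux K (cKW K u) (cKW K v) w ∈ residual L v := by
    rw [← h.2, tauW_cKW]
    exact ⟨w, hwu, rfl⟩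
  exact hL v _ _ ((RegEqWord.of_tauWAux h.1 w).symm.trans hw) hτ

theorem kMonotonic_approxLK (hL : ResidualsRegClosed L K) : KMonotonic K (ApproxLK L K) := by
  intro u v h
  refine ⟨h.1, fun a t t' hreg => approxLK_of_regEqWord ?_ fun z z' hz => ?_⟩
  · rw [cKW_append_singleton, cKW_append_singleton]
    exact hreg.resetStep
  · rw [cKW_append_singleton, cKW_append_singleton] at hz
    have hcons : RegEqWord K (cKW K u) (cKW K v) ((t, a) :: z) ((t', a) :: z') := .cons hreg hz
    rw [mem_residual_append_singleton, mem_residual_append_singleton]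
    exact ⟨h.mem_residual_of_regEqWord hL hcons, h.symm.mem_residual_of_regEqWord hL hcons.symm⟩

end Approx

section Finiteness

lemma finite_quotient_of_ker_le {α β : Type*} {s : Setoid α} (Φ : α → β)
    (hΦ : (Set.range Φ).Finite) (h : Setoid.ker Φ ≤ s) : Finite (Quotient s) := by
  have : Finite (Quotient (Setoid.ker Φ)) :=
    (Setoid.quotientKerEquivRange Φ).finite_iff.2 hΦ.to_subtype
  exact Finite.of_surjective (Quotient.map' id fun _ _ hab => h hab)
    (Quotient.ind fun u => ⟨Quotient.mk _ u, rfl⟩)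

lemma finiteIndex_iff_finite_quotient {A : Type} (s : Setoid (TimedWord A)) :
    FiniteIndex s.r ↔ Finite (Quotient s) := by
  have hcl : (Set.range fun u => {v | s.r u v}) = s.classes := by
    ext S
    constructor <;> rintro ⟨u, rfl⟩ <;> exact ⟨u, Set.ext fun _ => ⟨s.symm, s.symm⟩⟩
  rw [FiniteIndex, hcl, ← Set.finite_coe_iff, (Setoid.quotientEquivClasses s).finite_iff]

end Finiteness

section Guards

variable {K : ℕ} {x z : ℝ≥0}

lemma CC.sat_iff_of_floor_eq (hfl : ⌊x⌋₊ = ⌊z⌋₊) (hfr : fracPart x = 0 ↔ fracPart z = 0)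
    (φ : CC) : φ.sat x ↔ φ.sat z := by
  induction φ with
  | lt m => exact lt_natCast_iff_of_floor_eq m hfl
  | gt m => exact natCast_lt_iff_of_floor_eq m hfl hfr
  | eq m => exact eq_natCast_iff_of_floor_eq m hfl hfr
  | and φ ψ ihφ ihψ => exact and_congr ihφ ihψ

lemma CC.sat_iff_of_lt {φ : CC} (hφ : φ.maxConst ≤ K) (hx : (K : ℝ≥0) < x)
    (hz : (K : ℝ≥0) < z) : φ.sat x ↔ φ.sat z := by
  induction φ with
  | lt m =>
    have hm : (m : ℝ≥0) ≤ K := Nat.cast_le.2 hφ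
    exact iff_of_false (hm.trans hx.le).not_gt (hm.trans hz.le).not_gt
  | gt m =>
    have hm : (m : ℝ≥0) ≤ K := Nat.cast_le.2 hφ
    exact iff_of_true (hm.trans_lt hx) (hm.trans_lt hz)
  | eq m =>
    have hm : (m : ℝ≥0) ≤ K := Nat.cast_le.2 hφ
    exact iff_of_false (hm.trans_lt hx).ne' (hm.trans_lt hz).ne'
  | and φ ψ ihφ ihψ =>
    rw [CC.maxConst, max_le_iff] at hφ
    exact and_congr (ihφ hφ.1) (ihψ hφ.2)

lemma CC.sat_iff_of_regEq {φ : CC} (hφ : φ.maxConst ≤ K) (h : RegEq K x z) :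
    φ.sat x ↔ φ.sat z := by
  rcases h with ⟨hfl, hfr⟩ | ⟨hx, hz⟩
  · exact CC.sat_iff_of_floor_eq hfl hfr φ
  · exact CC.sat_iff_of_lt hφ hx hz

lemma mem_Ioo_floor (hx : ¬ IsNatVal x) : x ∈ Set.Ioo (⌊x⌋₊ : ℝ≥0) (⌊x⌋₊ + 1) :=
  ⟨(Nat.floor_le zero_le).lt_of_ne fun h => hx ⟨_, h.symm⟩, Nat.lt_floor_add_one x⟩

lemma sat_phiOf_self (K : ℕ) (x : ℝ≥0) : (phiOf K x).sat x := by
  unfold phiOf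
  split_ifs with hx hn
  · obtain ⟨m, rfl⟩ := hn
    simp [CC.sat]
  · simpa [CC.sat] using mem_Ioo_floor hn
  · exact not_le.1 hx

lemma sat_phiOf_iff : (phiOf K x).sat z ↔ RegEq K x z := by
  refine ⟨fun hz => ?_, fun h => ?_⟩
  · unfold phiOf at hz
    split_ifs at hz with hx hn
    · obtain ⟨m, rfl⟩ := hn
      simp only [CC.sat, Nat.floor_natCast] at hz
      rw [hz]
    · exact regEq_of_mem_Ioo (mem_Ioo_floor hn) (by simpa [CC.sat] using hz)
    · exact Or.inr ⟨not_le.1 hx, hz⟩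
  · by_cases hx : x ≤ (K : ℝ≥0)
    · rcases h with ⟨hfl, hfr⟩ | ⟨hx', -⟩
      · exact (CC.sat_iff_of_floor_eq hfl hfr _).1 (sat_phiOf_self K x)
      · exact absurd hx (not_le.2 hx')
    · rw [phiOf, if_neg hx]
      exact h.natCast_lt (not_le.1 hx)

lemma regEq_of_phiOf_eq {y : ℝ≥0} (h : phiOf K x = phiOf K y) : RegEq K x y :=
  sat_phiOf_iff.1 (h ▸ sat_phiOf_self K y)

lemma phiOf_natCast {m : ℕ} (hm : m ≤ K) : phiOf K m = CC.eq m := by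
  rw [phiOf, if_pos (Nat.cast_le.2 hm), if_pos ⟨m, rfl⟩, Nat.floor_natCast]

lemma finite_range_phiOf (K : ℕ) : (Set.range (phiOf K)).Finite := by
  refine (((Set.finite_Iic K).image CC.eq).union
    (((Set.finite_Iic K).image fun m => CC.and (CC.gt m) (CC.lt (m + 1))).insert
      (CC.gt K))).subset ?_
  rintro _ ⟨x, rfl⟩
  unfold phiOf
  split_ifs with hx hn
  · exact Or.inl ⟨_, Nat.floor_le_of_le hx, rfl⟩
  · exact Or.inr (Or.inr ⟨_, Nat.floor_le_of_le hx, rfl⟩)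
  · exact Or.inr (Or.inl rfl)

end Guards

section Runs

variable {A : Type} {M : TA A} {K : ℕ}

lemma steps_nil_inv {c c' : M.Q × ℝ≥0} (h : Steps M c [] c') : c' = c := by
  cases h; rfl

lemma steps_cons_inv {q : M.Q} {ν t : ℝ≥0} {a : A} {w : TimedWord A} {c' : M.Q × ℝ≥0}
    (h : Steps M (q, ν) ((t, a) :: w) c') :
    ∃ θ ∈ M.trans, θ.src = q ∧ θ.lab = a ∧ θ.guard.sat (ν + t) ∧
      Steps M (θ.dst, if θ.reset then 0 else ν + t) w c' := by
  cases h with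
  | cons θ hθ hsrc hlab hg hrest => exact ⟨θ, hθ, hsrc, hlab, hg, hrest⟩

lemma Steps.append {c c' c'' : M.Q × ℝ≥0} {u w : TimedWord A}
    (h₁ : Steps M c u c') (h₂ : Steps M c' w c'') : Steps M c (u ++ w) c'' := by
  induction h₁ with
  | nil => exact h₂
  | cons θ hθ hsrc hlab hg _ ih => exact .cons θ hθ hsrc hlab hg (ih h₂)

lemma Steps.exists_of_append {c c'' : M.Q × ℝ≥0} {u w : TimedWord A}
    (h : Steps M c (u ++ w) c'') : ∃ c', Steps M c u c' ∧ Steps M c' w c'' := by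
  induction u generalizing c with
  | nil => exact ⟨c, .nil c, h⟩
  | cons p u ih =>
    obtain ⟨q, ν⟩ := c
    obtain ⟨θ, hθ, hsrc, hlab, hg, hrest⟩ := steps_cons_inv h
    obtain ⟨c', h₁, h₂⟩ := ih hrest
    exact ⟨c', .cons θ hθ hsrc hlab hg h₁, h₂⟩

lemma mem_residual_lang_iff {u z : TimedWord A} :
    z ∈ residual M.Lang u ↔ ∃ q ν, Steps M (M.init, 0) u (q, ν) ∧ z ∈ M.LangFrom (q, ν) := by
  constructor
  · rintro ⟨qf, νf, hs, hfin⟩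
    obtain ⟨⟨q, ν⟩, h₁, h₂⟩ := Steps.exists_of_append hs
    exact ⟨q, ν, h₁, qf, νf, h₂, hfin⟩
  · rintro ⟨q, ν, hs, qf, νf, hs', hfin⟩
    exact ⟨qf, νf, hs.append hs', hfin⟩

lemma TA.IsIRTA.reset_guard (hirta : M.IsIRTA) (hK : M.MaxConstLE K) {θ : TTrans M.Q A}
    (hθ : θ ∈ M.trans) (hr : θ.reset = true) : ∃ m : ℕ, m ≤ K ∧ θ.guard = CC.eq m := by
  obtain ⟨m, hm⟩ := hirta θ hθ hr
  have := hK θ hθ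
  rw [hm] at this
  exact ⟨m, this, hm⟩

lemma TA.IsIRTA.step_clock (hirta : M.IsIRTA) (hK : M.MaxConstLE K) {θ : TTrans M.Q A}
    (hθ : θ ∈ M.trans) {y y' t t' : ℝ≥0} {c : ℕ} (hg : θ.guard.sat (y + c + t))
    (h : RegEq K (y + t) (y' + t')) :
    θ.guard.sat (y' + c + t') ∧ ∃ c' : ℕ,
      (if θ.reset then 0 else y + c + t) = resetStep K (y + t) + c' ∧
      (if θ.reset then 0 else y' + c + t') = resetStep K (y' + t') + c' := by
  have hc : RegEq K (y + c + t) (y' + c + t') := by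
    rw [add_right_comm, add_right_comm y']
    exact h.add_natCast c
  refine ⟨(CC.sat_iff_of_regEq (hK θ hθ) hc).1 hg, ?_⟩
  by_cases hx : ∃ m : ℕ, m ≤ K ∧ y + t = m
  · obtain ⟨m, hm, hxm⟩ := hx
    have hxm' := h.eq_natCast hxm hm
    rw [show resetStep K (y + t) = 0 from if_pos ⟨m, hm, hxm⟩,
      show resetStep K (y' + t') = 0 from if_pos ⟨m, hm, hxm'⟩]
    simp only [zero_add]
    cases θ.reset
    · refine ⟨m + c, ?_, ?_⟩ <;> simp only [Bool.false_eq_true, if_false, Nat.cast_add]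
      · rw [← hxm]; ring
      · rw [← hxm']; ring
    · exact ⟨0, by simp, by simp⟩
  · rw [show resetStep K (y + t) = y + t from if_neg hx,
      show resetStep K (y' + t') = y' + t' from if_neg (mt h.resetVal_iff.2 hx)]
    cases hr : θ.reset
    · exact ⟨c, by simp only [Bool.false_eq_true, if_false]; ring,
        by simp only [Bool.false_eq_true, if_false]; ring⟩
    · obtain ⟨m, hm, hθm⟩ := hirta.reset_guard hK hθ hr
      rw [hθm, CC.sat] at hg
      have hcm : c ≤ m := by
        exact_mod_cast (le_add_self.trans le_self_add : (c : ℝ≥0) ≤ y + c + t).trans_eq hg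
      refine absurd ⟨m - c, (Nat.sub_le m c).trans hm, ?_⟩ hx
      have hmc : ((m - c : ℕ) : ℝ≥0) + c = m := by rw [← Nat.cast_add, Nat.sub_add_cancel hcm]
      exact add_right_cancel (b := (c : ℝ≥0)) (by rw [hmc, ← hg]; ring)

end Runs

section Forward

variable {A : Type} {M : TA A} {K : ℕ}

lemma TA.IsIRTA.steps_of_regEqWord (hirta : M.IsIRTA) (hK : M.MaxConstLE K)
    {y y' : ℝ≥0} {w w' : TimedWord A} (hw : RegEqWord K y y' w w') {q q' : M.Q} {c : ℕ}
    {ν : ℝ≥0} (hs : Steps M (q, y + c) w (q', ν)) :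
    ∃ c' : ℕ, ν = cKAux K y (w.map Prod.fst) + c' ∧
      Steps M (q, y' + c) w' (q', cKAux K y' (w'.map Prod.fst) + c') := by
  induction hw generalizing q c with
  | nil y y' =>
    obtain ⟨rfl, rfl⟩ := Prod.mk.inj (steps_nil_inv hs)
    exact ⟨c, rfl, .nil _⟩
  | cons hreg _ ih =>
    obtain ⟨θ, hθ, hsrc, hlab, hg, hrest⟩ := steps_cons_inv hs
    obtain ⟨hg', c', hν, hν'⟩ := hirta.step_clock hK hθ hg hreg
    rw [hν] at hrest
    obtain ⟨c'', hνf, hs'⟩ := ih hrest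
    exact ⟨c'', hνf, .cons θ hθ hsrc hlab hg' (hν' ▸ hs')⟩

lemma TA.IsIRTA.reach_clock (hirta : M.IsIRTA) (hK : M.MaxConstLE K) {u : TimedWord A}
    {q : M.Q} {ν : ℝ≥0} (h : Steps M (M.init, 0) u (q, ν)) : ∃ c : ℕ, ν = cKW K u + c := by
  have h' : Steps M (M.init, 0 + ((0 : ℕ) : ℝ≥0)) u (q, ν) := by simpa using h
  obtain ⟨c, hν, -⟩ := hirta.steps_of_regEqWord hK (RegEqWord.refl K 0 u) h'
  exact ⟨c, hν⟩

lemma TA.IsIRTA.mem_langFrom_of_regEqWord (hirta : M.IsIRTA) (hK : M.MaxConstLE K)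
    {y y' : ℝ≥0} {w w' : TimedWord A} (hw : RegEqWord K y y' w w') {q : M.Q} (c : ℕ)
    (h : w ∈ M.LangFrom (q, y + c)) : w' ∈ M.LangFrom (q, y' + c) := by
  obtain ⟨qf, νf, hs, hfin⟩ := h
  obtain ⟨c', -, hs'⟩ := hirta.steps_of_regEqWord hK hw hs
  exact ⟨qf, _, hs', hfin⟩

lemma TA.IsIRTA.mem_langFrom_of_lt (hirta : M.IsIRTA) (hK : M.MaxConstLE K) {ν ν' : ℝ≥0}
    (hν : (K : ℝ≥0) < ν) (hν' : (K : ℝ≥0) < ν') {w : TimedWord A} {q : M.Q}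
    (h : w ∈ M.LangFrom (q, ν)) : w ∈ M.LangFrom (q, ν') := by
  simpa using hirta.mem_langFrom_of_regEqWord hK (RegEqWord.of_lt hν hν' w) 0 (by simpa using h)

lemma TA.IsIRTA.residualsRegClosed (hirta : M.IsIRTA) (hK : M.MaxConstLE K) :
    ResidualsRegClosed M.Lang K := by
  intro u w w' hw hwu
  rw [mem_residual_lang_iff] at hwu ⊢
  obtain ⟨q, ν, hu, hwq⟩ := hwu
  obtain ⟨c, rfl⟩ := hirta.reach_clock hK hu
  exact ⟨q, _, hu, hirta.mem_langFrom_of_regEqWord hK hw c hwq⟩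

def lowConfigs (M : TA A) (K : ℕ) (u : TimedWord A) : Set (M.Q × Fin (K + 1)) :=
  {p | Steps M (M.init, 0) u (p.1, cKW K u + (p.2 : ℕ))}

def highStates (M : TA A) (K : ℕ) (u : TimedWord A) : Set M.Q :=
  {q | ∃ ν, Steps M (M.init, 0) u (q, ν) ∧ (K : ℝ≥0) < ν}

lemma TA.IsIRTA.mem_residual_iff (hirta : M.IsIRTA) (hK : M.MaxConstLE K)
    (u z : TimedWord A) :
    z ∈ residual M.Lang u ↔
      (∃ p ∈ lowConfigs M K u, z ∈ M.LangFrom (p.1, cKW K u + (p.2 : ℕ))) ∨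
        ∃ q ∈ highStates M K u, z ∈ M.LangFrom (q, cKW K u + (K + 1 : ℕ)) := by
  have hK1 : (K : ℝ≥0) < cKW K u + (K + 1 : ℕ) :=
    (Nat.cast_lt.2 K.lt_succ_self).trans_le le_add_self
  rw [mem_residual_lang_iff]
  constructor
  · rintro ⟨q, ν, hu, hz⟩
    obtain ⟨c, rfl⟩ := hirta.reach_clock hK hu
    by_cases hc : c ≤ K
    · exact Or.inl ⟨(q, ⟨c, Nat.lt_succ_of_le hc⟩), hu, hz⟩
    · have hν : (K : ℝ≥0) < cKW K u + c :=
        (Nat.cast_lt.2 (not_le.1 hc)).trans_le le_add_self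
      exact Or.inr ⟨q, ⟨_, hu, hν⟩, hirta.mem_langFrom_of_lt hK hν hK1 hz⟩
  · rintro (⟨p, hp, hz⟩ | ⟨q, ⟨ν, hu, hν⟩, hz⟩)
    · exact ⟨p.1, _, hp, hz⟩
    · exact ⟨q, ν, hu, hirta.mem_langFrom_of_lt hK hK1 hν hz⟩

lemma TA.IsIRTA.approxLK_of_configs_eq (hirta : M.IsIRTA) (hK : M.MaxConstLE K)
    {u v : TimedWord A} (hreg : RegEq K (cKW K u) (cKW K v))
    (hlow : lowConfigs M K u = lowConfigs M K v) (hhigh : highStates M K u = highStates M K v) :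
    ApproxLK M.Lang K u v := by
  refine approxLK_of_regEqWord hreg fun w w' hw => ?_
  have transfer (q : M.Q) (c : ℕ) :
      w ∈ M.LangFrom (q, cKW K u + c) ↔ w' ∈ M.LangFrom (q, cKW K v + c) :=
    ⟨hirta.mem_langFrom_of_regEqWord hK hw c, hirta.mem_langFrom_of_regEqWord hK hw.symm c⟩
  rw [hirta.mem_residual_iff hK, hirta.mem_residual_iff hK, hlow, hhigh]
  simp only [transfer]

lemma TA.IsIRTA.finiteIndex_approxLK (hirta : M.IsIRTA) (hK : M.MaxConstLE K) [Finite M.Q] :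
    FiniteIndex (ApproxLK M.Lang K) := by
  refine (finiteIndex_iff_finite_quotient (approxSetoid M.Lang K)).2 <|
    finite_quotient_of_ker_le (fun u => (phiOf K (cKW K u), lowConfigs M K u, highStates M K u))
      (((finite_range_phiOf K).prod Set.finite_univ).subset ?_) fun u v h => ?_
  · rintro _ ⟨u, rfl⟩
    exact ⟨⟨cKW K u, rfl⟩, trivial⟩
  · simp only [Setoid.ker_def, Prod.mk.injEq] at h
    exact hirta.approxLK_of_configs_eq hK (regEq_of_phiOf_eq h.1) h.2.1 h.2.2

theorem TA.IsFinite.exists_kMonotonic_finiteIndex (hfin : M.IsFinite) (hirta : M.IsIRTA) :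
    ∃ K : ℕ, KMonotonic K (ApproxLK M.Lang K) ∧ FiniteIndex (ApproxLK M.Lang K) := by
  obtain ⟨K, hK⟩ := (hfin.2.image fun θ => θ.guard.maxConst).bddAbove
  have hK' : M.MaxConstLE K := fun θ hθ => hK ⟨θ, hθ, rfl⟩
  have := hfin.1
  exact ⟨K, kMonotonic_approxLK (hirta.residualsRegClosed hK'), hirta.finiteIndex_approxLK hK'⟩

end Forward

section Backward

variable {A : Type} {L : Set (TimedWord A)} {K : ℕ}

noncomputable abbrev approxTA (L : Set (TimedWord A)) (K : ℕ) : TA A :=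
  Aapprox L K (approxSetoid L K)

lemma ite_reset_eq_resetStep {x x' : ℝ≥0} {b : Bool} (h : RegEq K x x')
    (hb : b = true ↔ ∃ m : ℕ, m ≤ K ∧ x = m) : (if b then 0 else x') = resetStep K x' := by
  cases b
  · exact (if_neg fun h' => Bool.false_ne_true (hb.2 (h.resetVal_iff.2 h'))).symm
  · exact (if_pos (h.resetVal_iff.1 (hb.1 rfl))).symm

lemma approxTA_step (hmono : KMonotonic K (ApproxLK L K)) {θ : TTrans (approxTA L K).Q A}
    (hθ : θ ∈ (approxTA L K).trans) {u : TimedWord A} {t : ℝ≥0} {a : A}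
    (hsrc : θ.src = Quotient.mk _ u) (hlab : θ.lab = a) (hg : θ.guard.sat (cKW K u + t)) :
    θ.dst = Quotient.mk _ (u ++ [(t, a)]) ∧
      (if θ.reset then 0 else cKW K u + t) = cKW K (u ++ [(t, a)]) := by
  obtain ⟨u₁, a₁, t₁, hsrc₁, hdst, hlab₁, hguard, hreset⟩ := hθ
  obtain rfl : a₁ = a := hlab₁.symm.trans hlab
  have hu : ApproxLK L K u₁ u := Quotient.exact (hsrc₁.symm.trans hsrc)
  have hreg : RegEq K (cKW K u₁ + t₁) (cKW K u + t) := sat_phiOf_iff.1 (hguard ▸ hg)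
  refine ⟨hdst.trans (Quotient.sound ((hmono _ _ hu).2 a₁ t₁ t hreg)), ?_⟩
  rw [cKW_append_singleton]
  exact ite_reset_eq_resetStep hreg hreset

lemma exists_approxTA_trans (u : TimedWord A) (t : ℝ≥0) (a : A) :
    ∃ θ ∈ (approxTA L K).trans, θ.src = Quotient.mk _ u ∧ θ.lab = a ∧
      θ.guard.sat (cKW K u + t) :=
  ⟨⟨Quotient.mk _ u, Quotient.mk _ (u ++ [(t, a)]), a, phiOf K (cKW K u + t),
      decide (∃ m : ℕ, m ≤ K ∧ cKW K u + t = m)⟩,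
    ⟨u, a, t, rfl, rfl, rfl, rfl, decide_eq_true_iff⟩, rfl, rfl, sat_phiOf_self K _⟩

lemma steps_approxTA_iff (hmono : KMonotonic K (ApproxLK L K)) (u w : TimedWord A)
    (c : (approxTA L K).Q × ℝ≥0) :
    Steps (approxTA L K) (Quotient.mk _ u, cKW K u) w c ↔
      c = (Quotient.mk _ (u ++ w), cKW K (u ++ w)) := by
  induction w generalizing u with
  | nil =>
    rw [List.append_nil]
    exact ⟨steps_nil_inv, fun h => h ▸ .nil _⟩
  | cons p w ih =>
    obtain ⟨t, a⟩ := p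
    rw [← List.singleton_append, ← List.append_assoc]
    constructor
    · intro h
      obtain ⟨θ, hθ, hsrc, hlab, hg, hrest⟩ := steps_cons_inv h
      obtain ⟨hdst, hclock⟩ := approxTA_step hmono hθ hsrc hlab hg
      rw [hdst, hclock] at hrest
      exact (ih _).1 hrest
    · intro h
      obtain ⟨θ, hθ, hsrc, hlab, hg⟩ := exists_approxTA_trans (L := L) (K := K) u t a
      obtain ⟨hdst, hclock⟩ := approxTA_step hmono hθ hsrc hlab hg
      refine .cons θ hθ hsrc hlab hg ?_
      rw [hdst, hclock]
      exact (ih _).2 h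

lemma lang_approxTA (hmono : KMonotonic K (ApproxLK L K)) : (approxTA L K).Lang = L := by
  ext w
  have hrun (c) : Steps (approxTA L K) ((approxTA L K).init, 0) w c ↔
      c = (Quotient.mk _ w, cKW K w) :=
    steps_approxTA_iff hmono [] w c
  constructor
  · rintro ⟨q, ν, hs, u, hq, hu⟩
    obtain ⟨rfl, -⟩ := Prod.mk.inj ((hrun _).1 hs)
    exact (Quotient.exact hq : ApproxLK L K w u).mem_iff.2 hu
  · intro hw
    exact ⟨_, _, (hrun _).2 rfl, w, rfl, hw⟩

lemma isIRTA_approxTA : (approxTA L K).IsIRTA := by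
  rintro θ ⟨u, a, t, -, -, -, hguard, hreset⟩ hr
  obtain ⟨m, hm, hx⟩ := hreset.1 hr
  exact ⟨m, by rw [hguard, hx, phiOf_natCast hm]⟩

lemma finite_trans_approxTA [Finite A] [Finite (approxTA L K).Q] :
    (approxTA L K).trans.Finite := by
  refine (Set.finite_univ.prod (Set.finite_univ.prod (Set.finite_univ.prod
    ((finite_range_phiOf K).prod Set.finite_univ)))).image
      (fun p => (⟨p.1, p.2.1, p.2.2.1, p.2.2.2.1, p.2.2.2.2⟩ : TTrans _ A)) |>.subset ?_
  rintro θ ⟨u, a, t, -, -, -, hguard, -⟩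
  exact ⟨(θ.src, θ.dst, θ.lab, θ.guard, θ.reset),
    ⟨trivial, trivial, trivial, ⟨_, hguard.symm⟩, trivial⟩, rfl⟩

theorem exists_irta_of_kMonotonic_finiteIndex [Finite A] (hmono : KMonotonic K (ApproxLK L K))
    (hfin : FiniteIndex (ApproxLK L K)) : ∃ M : TA A, M.IsFinite ∧ M.IsIRTA ∧ M.Lang = L := by
  have : Finite (approxTA L K).Q := (finiteIndex_iff_finite_quotient (approxSetoid L K)).1 hfin
  exact ⟨approxTA L K, ⟨this, finite_trans_approxTA⟩, isIRTA_approxTA, lang_approxTA hmono⟩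

end Backward

/-- `L` is accepted by a 1-IRTA iff for some `K`, `≈^{L,K}` is
`K`-monotonic and of finite index. -/
theorem statement13 {A : Type} [Finite A] (L : Set (TimedWord A)) :
    (∃ M : TA A, M.IsFinite ∧ M.IsIRTA ∧ M.Lang = L) ↔
      (∃ K : ℕ, KMonotonic K (ApproxLK L K) ∧ FiniteIndex (ApproxLK L K)) := by
  constructor
  · rintro ⟨M, hfin, hirta, rfl⟩
    exact hfin.exists_kMonotonic_finiteIndex hirta
  · rintro ⟨K, hmono, hfin⟩
    exact exists_irta_of_kMonotonic_finiteIndex hmono hfin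

end IRTA
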